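/- For all integers k,n ≥ 1 and 0 ≤ h ≤ (k−1)(n−1), the generalized Narayana numbers satisfy N(k,n,h) = N(n,k,h); that is, the number of standard Young tableaux of shape (n^k) with h ascents equals the number of standard Young tableaux of shape (k^n) with h ascents. -/

import Mathlib

open Finset

/-- The set of cells of the Young diagram with row lengths `lam`
(rows and columns are 0-indexed). -/
def ydCells (lam : List ℕ) : Finset (ℕ × ℕ) :=
  (Finset.range lam.length).biUnion
    (fun r => (Finset.range (lam.getD r 0)).image (fun c => (r, c)))

/-- `lam` is a partition: a weakly decreasing list of positive integers. -/
def IsPartition (lam : List ℕ) : Prop :=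
  lam.Pairwise (· ≥ ·) ∧ ∀ x ∈ lam, 0 < x

/-- A standard Young tableau of shape `lam`: a filling of the cells of `lam` with the
numbers `1, …, lam.sum`, each used exactly once, increasing along rows and columns. -/
structure SYT (lam : List ℕ) where
  entry : ℕ × ℕ → ℕ
  zero_outside : ∀ p, p ∉ ydCells lam → entry p = 0
  bijOn : Set.BijOn entry (ydCells lam : Set (ℕ × ℕ)) (Set.Icc 1 lam.sum)
  row_incr : ∀ r c : ℕ, (r, c + 1) ∈ ydCells lam → entry (r, c) < entry (r, c + 1)
  col_incr : ∀ r c : ℕ, (r + 1, c) ∈ ydCells lam → entry (r, c) < entry (r + 1, c)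

open Classical in
/-- The descent set of a standard Young tableau: those `1 ≤ i ≤ N-1` such that the row of
`i` is strictly above (smaller index than) the row of `i+1`. -/
noncomputable def desSet (lam : List ℕ) (T : SYT lam) : Finset ℕ :=
  (Finset.Icc 1 (lam.sum - 1)).filter (fun i =>
    ∃ p ∈ ydCells lam, ∃ q ∈ ydCells lam,
      T.entry p = i ∧ T.entry q = i + 1 ∧ p.1 < q.1)

open Classical in
/-- The ascent set of a standard Young tableau: those `1 ≤ i ≤ N-1` such that the row of
`i` is strictly below (larger index than) the row of `i+1`. -/
noncomputable def ascSet (lam : List ℕ) (T : SYT lam) : Finset ℕ :=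
  (Finset.Icc 1 (lam.sum - 1)).filter (fun i =>
    ∃ p ∈ ydCells lam, ∃ q ∈ ydCells lam,
      T.entry p = i ∧ T.entry q = i + 1 ∧ q.1 < p.1)

open Classical in
/-- The high descent set: descents `i` such that moreover `i+1` lies strictly to the left
of `i`. -/
noncomputable def hdesSet (lam : List ℕ) (T : SYT lam) : Finset ℕ :=
  (Finset.Icc 1 (lam.sum - 1)).filter (fun i =>
    ∃ p ∈ ydCells lam, ∃ q ∈ ydCells lam,
      T.entry p = i ∧ T.entry q = i + 1 ∧ p.1 < q.1 ∧ q.2 < p.2)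

/-- The number of descents. -/
noncomputable def desNum (lam : List ℕ) (T : SYT lam) : ℕ := (desSet lam T).card

/-- The number of ascents. -/
noncomputable def ascNum (lam : List ℕ) (T : SYT lam) : ℕ := (ascSet lam T).card

/-- The number of high descents. -/
noncomputable def hdesNum (lam : List ℕ) (T : SYT lam) : ℕ := (hdesSet lam T).card

open Classical in
/-- `bounce lam T r s` is the number of `1 ≤ i ≤ N-1` such that `i` lies in (0-indexed)
row `r` and `i+1` lies in (0-indexed) row `s` of `T`. -/
noncomputable def bounce (lam : List ℕ) (T : SYT lam) (r s : ℕ) : ℕ :=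
  ((Finset.Icc 1 (lam.sum - 1)).filter (fun i =>
    ∃ p ∈ ydCells lam, ∃ q ∈ ydCells lam,
      T.entry p = i ∧ T.entry q = i + 1 ∧ p.1 = r ∧ q.1 = s)).card

/-!
Count pairs `(T, f)` of a tableau `T` of shape `λ ⊢ N` and a weakly increasing `f : [1, N] → [1, m]`
that increases strictly at every ascent of `T`. The composite `f ∘ T` is a reverse plane partition
of shape `λ` with entries at most `m`, and every such filling `M` arises exactly once: `T` must
list the cells in the lexicographic order of (value of `M`, row, column), because on a run where
`f` is constant there is no ascent, so the rows weakly increase. Subtracting from `f` the number of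
ascents below each point shows that `T` contributes `d(m - asc T)` pairs, where `d(j)` counts
weakly increasing maps `[1, N] → [1, j]`. Hence `∑ₕ N(λ, h) d(m - h)` counts reverse plane
partitions, which transposition preserves for rectangles; since `d(0) = 0` and `d(1) = 1`, the
system is unitriangular in `h`, so `N(k, n, h) = N(n, k, h)`.
-/

theorem mem_ydCells {lam : List ℕ} {p : ℕ × ℕ} :
    p ∈ ydCells lam ↔ p.1 < lam.length ∧ p.2 < lam.getD p.1 0 := by
  rcases p with ⟨r, c⟩
  simp only [ydCells, mem_biUnion, mem_range, mem_image, Prod.mk.injEq]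
  constructor
  · rintro ⟨r, hr, c, hc, rfl, rfl⟩
    exact ⟨hr, hc⟩
  · rintro ⟨hr, hc⟩
    exact ⟨r, hr, c, hc, rfl, rfl⟩

theorem mem_ydCells_of_le {lam : List ℕ} {r c c' : ℕ} (h : (r, c') ∈ ydCells lam)
    (hc : c ≤ c') : (r, c) ∈ ydCells lam := by
  rw [mem_ydCells] at h ⊢
  exact ⟨h.1, lt_of_le_of_lt hc h.2⟩

theorem card_ydCells (lam : List ℕ) : #(ydCells lam) = lam.sum := by
  rw [ydCells, card_biUnion]
  · simp only [card_image_of_injective _ (Prod.mk_right_injective _), card_range]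
    induction lam with
    | nil => simp
    | cons a l ih =>
      rw [List.length_cons, sum_range_succ', List.sum_cons, add_comm]
      simpa only [List.getD_cons_succ, List.getD_cons_zero] using congrArg (a + ·) ih
  · intro r _ r' _ hrr'
    simp only [Function.onFun, disjoint_left, mem_image]
    rintro _ ⟨c, _, rfl⟩ ⟨c', _, h⟩
    exact hrr' (congrArg Prod.fst h).symm

theorem mem_ydCells_replicate {k n : ℕ} {p : ℕ × ℕ} :
    p ∈ ydCells (List.replicate k n) ↔ p.1 < k ∧ p.2 < n := by
  rw [mem_ydCells, List.length_replicate, and_congr_right_iff]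
  intro hk
  simp [List.getD_eq_getElem?_getD, hk]

theorem finite_of_injective_of_bounded {α ι : Type*} (F : α → ι → ℕ) (hF : Function.Injective F)
    (s : Finset ι) (hs : ∀ a, ∀ i ∉ s, F a i = 0) (B : ℕ) (hB : ∀ a i, F a i ≤ B) :
    Finite α := by
  refine Finite.of_injective (fun a (i : s) => (⟨F a i, Nat.lt_succ_of_le (hB a i)⟩ : Fin (B + 1)))
    fun a b h => hF (funext fun i => ?_)
  by_cases hi : i ∈ s
  · simpa using congrFun h ⟨i, hi⟩
  · rw [hs a i hi, hs b i hi]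

theorem monotoneOn_Icc_of_le_succ {α : Type*} [Preorder α] {g : ℕ → α} {a b : ℕ}
    (h : ∀ i ∈ Set.Ico a b, g i ≤ g (i + 1)) : MonotoneOn g (Set.Icc a b) :=
  monotoneOn_of_le_succ Set.ordConnected_Icc fun i _ hi hi' =>
    h i ⟨hi.1, Nat.lt_of_succ_le hi'.2⟩

theorem card_filter_lt_add_one (A : Finset ℕ) (i : ℕ) :
    #{a ∈ A | a < i + 1} = #{a ∈ A | a < i} + if i ∈ A then 1 else 0 := by
  simp only [card_filter, ← sum_ite_eq' A i (fun _ => 1), ← sum_add_distrib]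
  refine sum_congr rfl fun a _ => ?_
  by_cases h : a = i <;> by_cases h' : a < i <;> simp [h, h'] <;> omega

namespace SYT

variable {lam : List ℕ} (T : SYT lam)

@[ext]
theorem ext {T T' : SYT lam} (h : T.entry = T'.entry) : T = T' := by
  cases T; cases T'; simp_all

theorem entry_le_sum (p : ℕ × ℕ) : T.entry p ≤ lam.sum := by
  by_cases hp : p ∈ ydCells lam
  · exact (T.bijOn.mapsTo hp).2
  · simp [T.zero_outside p hp]

theorem ascSet_subset_Ico : ascSet lam T ⊆ Ico 1 lam.sum := fun i hi => by
  have := (mem_filter.mp hi).1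
  simp only [mem_Icc] at this
  exact mem_Ico.mpr ⟨this.1, by omega⟩

instance : Finite (SYT lam) :=
  finite_of_injective_of_bounded SYT.entry (fun _ _ => SYT.ext) (ydCells lam)
    (fun T => T.zero_outside) lam.sum entry_le_sum

noncomputable def cellOf (i : ℕ) : ℕ × ℕ := Function.invFunOn T.entry (ydCells lam) i

variable {T} {i : ℕ} {p : ℕ × ℕ}

theorem cellOf_mem (hi : i ∈ Set.Icc 1 lam.sum) : T.cellOf i ∈ ydCells lam :=
  T.bijOn.surjOn.mapsTo_invFunOn hi

theorem entry_cellOf (hi : i ∈ Set.Icc 1 lam.sum) : T.entry (T.cellOf i) = i :=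
  Function.invFunOn_eq (T.bijOn.surjOn hi)

theorem cellOf_entry (hp : p ∈ ydCells lam) : T.cellOf (T.entry p) = p :=
  T.bijOn.injOn.leftInvOn_invFunOn hp

theorem entry_lt_entry_of_lt {r c c' : ℕ} (h : (r, c') ∈ ydCells lam) (hc : c < c') :
    T.entry (r, c) < T.entry (r, c') := by
  induction c' with
  | zero => omega
  | succ d ih =>
    rcases Nat.lt_succ_iff_lt_or_eq.mp hc with hc | rfl
    · exact (ih (mem_ydCells_of_le h d.le_succ) hc).trans (T.row_incr r d h)
    · exact T.row_incr r c h

theorem card_filter_entry_le :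
    #{q ∈ ydCells lam | T.entry q ≤ T.entry p} = T.entry p := by
  trans #(Icc 1 (T.entry p))
  · refine card_nbij T.entry (fun q hq => ?_) (fun q hq q' hq' h => ?_) (fun j hj => ?_)
    · simp only [coe_filter, Set.mem_ofPred_eq] at hq
      exact mem_Icc.mpr ⟨(T.bijOn.mapsTo hq.1).1, hq.2⟩
    · simp only [coe_filter, Set.mem_ofPred_eq] at hq hq'
      exact T.bijOn.injOn hq.1 hq'.1 h
    · simp only [coe_Icc, Set.mem_Icc] at hj
      have hj' : j ∈ Set.Icc 1 lam.sum := ⟨hj.1, hj.2.trans (T.entry_le_sum p)⟩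
      refine ⟨T.cellOf j, ?_, T.entry_cellOf hj'⟩
      simp only [coe_filter, Set.mem_ofPred_eq, T.entry_cellOf hj']
      exact ⟨cellOf_mem hj', hj.2⟩
  · simp

theorem mem_ascSet_iff (h1 : 1 ≤ i) (h2 : i < lam.sum) :
    i ∈ ascSet lam T ↔ (T.cellOf (i + 1)).1 < (T.cellOf i).1 := by
  have hi : i ∈ Set.Icc 1 lam.sum := ⟨h1, h2.le⟩
  have hi' : i + 1 ∈ Set.Icc 1 lam.sum := ⟨by omega, h2⟩
  simp only [ascSet, mem_filter, mem_Icc]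
  constructor
  · rintro ⟨-, p, hp, q, hq, rfl, hqi, hlt⟩
    rwa [← hqi, cellOf_entry hp, cellOf_entry hq]
  · intro h
    exact ⟨⟨h1, by omega⟩, _, cellOf_mem hi, _, cellOf_mem hi', entry_cellOf hi,
      entry_cellOf hi', h⟩

theorem monotoneOn_row_cellOf {a b : ℕ} (ha : 1 ≤ a) (hb : b ≤ lam.sum)
    (hasc : ∀ i ∈ Set.Ico a b, i ∉ ascSet lam T) :
    MonotoneOn (fun i => (T.cellOf i).1) (Set.Icc a b) :=
  monotoneOn_Icc_of_le_succ fun i hi =>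
    not_lt.mp ((mem_ascSet_iff (ha.trans hi.1) (hi.2.trans_le hb)).not.mp (hasc i hi))

end SYT

/-- Stanley's compatible functions `[1, N] → [1, m]` for the descent set `A`, extended by `0`. -/
structure CompatibleFun (N : ℕ) (A : Finset ℕ) (m : ℕ) where
  toFun : ℕ → ℕ
  mapsTo : Set.MapsTo toFun (Set.Icc 1 N) (Set.Icc 1 m)
  add_le_succ : ∀ i ∈ Set.Ico 1 N, toFun i + (if i ∈ A then 1 else 0) ≤ toFun (i + 1)
  zero_outside : ∀ i ∉ Set.Icc 1 N, toFun i = 0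

namespace CompatibleFun

variable {N m : ℕ} {A : Finset ℕ}

@[ext]
theorem ext {f g : CompatibleFun N A m} (h : f.toFun = g.toFun) : f = g := by
  cases f; cases g; simp_all

theorem le_bound (f : CompatibleFun N A m) (i : ℕ) : f.toFun i ≤ m := by
  by_cases hi : i ∈ Set.Icc 1 N
  · exact (f.mapsTo hi).2
  · simp [f.zero_outside i hi]

instance : Finite (CompatibleFun N A m) :=
  finite_of_injective_of_bounded CompatibleFun.toFun (fun _ _ => CompatibleFun.ext) (Icc 1 N)
    (fun f i hi => f.zero_outside i (by simpa using hi)) m le_bound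

theorem monotoneOn (f : CompatibleFun N A m) : MonotoneOn f.toFun (Set.Iic N) := by
  have : MonotoneOn f.toFun (Set.Icc 0 N) := monotoneOn_Icc_of_le_succ fun i hi => by
    rcases Nat.eq_zero_or_pos i with rfl | hi0
    · simp [f.zero_outside 0 (by simp)]
    · exact le_of_add_le_left (f.add_le_succ i ⟨hi0, hi.2⟩)
  exact fun i hi j hj => this ⟨i.zero_le, hi⟩ ⟨j.zero_le, hj⟩

theorem lt_succ_of_mem (f : CompatibleFun N A m) {i : ℕ} (hi : i ∈ Set.Ico 1 N) (hA : i ∈ A) :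
    f.toFun i < f.toFun (i + 1) := by
  simpa [hA] using f.add_le_succ i hi

theorem monotoneOn_sub_card (f : CompatibleFun N A m) :
    MonotoneOn (fun i => f.toFun i - #{a ∈ A | a < i}) (Set.Icc 1 N) :=
  monotoneOn_Icc_of_le_succ fun i hi => by
    have := f.add_le_succ i hi
    simp only [card_filter_lt_add_one]
    omega

theorem sub_card_filter_mem_Icc (f : CompatibleFun N A m) (hA : A ⊆ Ico 1 N) {i : ℕ}
    (hi : i ∈ Set.Icc 1 N) : f.toFun i - #{a ∈ A | a < i} ∈ Set.Icc 1 (m - #A) := by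
  have hN : 1 ≤ N := hi.1.trans hi.2
  have h1 : #{a ∈ A | a < 1} = 0 := by
    rw [card_eq_zero, filter_eq_empty_iff]
    exact fun a ha => not_lt.mpr (mem_Ico.mp (hA ha)).1
  have hAN : #{a ∈ A | a < N} = #A := by
    rw [filter_true_of_mem fun a ha => (mem_Ico.mp (hA ha)).2]
  have hlo := f.monotoneOn_sub_card (Set.left_mem_Icc.mpr hN) hi hi.1
  have hhi := f.monotoneOn_sub_card hi (Set.right_mem_Icc.mpr hN) hi.2
  have := (f.mapsTo (Set.left_mem_Icc.mpr hN)).1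
  have := (f.mapsTo (Set.right_mem_Icc.mpr hN)).2
  simp only [hAN, h1] at hlo hhi
  constructor <;> omega

theorem card_lt (f : CompatibleFun N A m) (hN : 1 ≤ N) (hA : A ⊆ Ico 1 N) : #A < m := by
  have := f.sub_card_filter_mem_Icc hA ⟨le_rfl, hN⟩
  exact Nat.lt_of_sub_pos (this.1.trans this.2)

def shiftEquiv (hA : A ⊆ Ico 1 N) (j : ℕ) : CompatibleFun N A (j + #A) ≃ CompatibleFun N ∅ j where
  toFun f :=
    { toFun := fun i => f.toFun i - #{a ∈ A | a < i}
      mapsTo := fun i hi => by simpa using f.sub_card_filter_mem_Icc hA hi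
      add_le_succ := fun i hi => by
        simpa using f.monotoneOn_sub_card ⟨hi.1, hi.2.le⟩ ⟨by omega, hi.2⟩ (Nat.le_succ i)
      zero_outside := fun i hi => by simp [f.zero_outside i hi] }
  invFun g :=
    { toFun := fun i => if i ∈ Set.Icc 1 N then g.toFun i + #{a ∈ A | a < i} else 0
      mapsTo := fun i hi => by
        have := g.mapsTo hi
        have : #{a ∈ A | a < i} ≤ #A := card_filter_le _ _
        dsimp only
        rw [if_pos hi]
        simp only [Set.mem_Icc] at *
        omega
      add_le_succ := fun i hi => by
        have := g.add_le_succ i hi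
        rw [if_pos (show i ∈ Set.Icc 1 N from ⟨hi.1, hi.2.le⟩),
          if_pos (show i + 1 ∈ Set.Icc 1 N from ⟨by omega, hi.2⟩), card_filter_lt_add_one]
        simp only [notMem_empty, if_false] at this
        omega
      zero_outside := fun i hi => if_neg hi }
  left_inv f := by
    ext i
    by_cases hi : i ∈ Set.Icc 1 N
    · have := (f.sub_card_filter_mem_Icc hA hi).1
      simp only [if_pos hi]
      omega
    · simp [hi, f.zero_outside i hi]
  right_inv g := by
    ext i
    by_cases hi : i ∈ Set.Icc 1 N
    · simp [hi]
    · simp [hi, g.zero_outside i hi]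

theorem card_empty_zero (hN : 1 ≤ N) : Nat.card (CompatibleFun N ∅ 0) = 0 :=
  have : IsEmpty (CompatibleFun N ∅ 0) := ⟨fun f => by simpa using f.card_lt hN (empty_subset _)⟩
  Nat.card_of_isEmpty

theorem card_eq_card_empty (hN : 1 ≤ N) (hA : A ⊆ Ico 1 N) :
    Nat.card (CompatibleFun N A m) = Nat.card (CompatibleFun N ∅ (m - #A)) := by
  rcases lt_or_ge #A m with h | h
  · obtain ⟨j, rfl⟩ : ∃ j, m = j + #A := ⟨m - #A, by omega⟩
    rw [Nat.add_sub_cancel]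
    exact Nat.card_congr (shiftEquiv hA j)
  · have : IsEmpty (CompatibleFun N A m) := ⟨fun f => (f.card_lt hN hA).not_ge h⟩
    rw [Nat.sub_eq_zero_of_le h, card_empty_zero hN, Nat.card_of_isEmpty]

theorem card_empty_one : Nat.card (CompatibleFun N ∅ 1) = 1 := by
  refine Nat.card_eq_one_iff_unique.mpr ⟨⟨fun f g => ext (funext fun i => ?_)⟩, ⟨?_⟩⟩
  · by_cases hi : i ∈ Set.Icc 1 N
    · have := f.mapsTo hi
      have := g.mapsTo hi
      simp only [Set.mem_Icc] at *
      omega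
    · rw [f.zero_outside i hi, g.zero_outside i hi]
  · exact
      { toFun := fun i => if i ∈ Set.Icc 1 N then 1 else 0
        mapsTo := fun i hi => by simp [hi]
        add_le_succ := fun i hi => by
          rw [if_pos (show i ∈ Set.Icc 1 N from ⟨hi.1, hi.2.le⟩),
            if_pos (show i + 1 ∈ Set.Icc 1 N from ⟨by omega, hi.2⟩)]
          simp
        zero_outside := fun i hi => if_neg hi }

end CompatibleFun

structure ReversePlanePartition (lam : List ℕ) (m : ℕ) where
  entry : ℕ × ℕ → ℕ
  zero_outside : ∀ p, p ∉ ydCells lam → entry p = 0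
  mapsTo : Set.MapsTo entry (ydCells lam : Set (ℕ × ℕ)) (Set.Icc 1 m)
  row_mono : ∀ r c : ℕ, (r, c + 1) ∈ ydCells lam → entry (r, c) ≤ entry (r, c + 1)
  col_mono : ∀ r c : ℕ, (r + 1, c) ∈ ydCells lam → entry (r, c) ≤ entry (r + 1, c)

namespace ReversePlanePartition

variable {lam : List ℕ} {m : ℕ}

@[ext]
theorem ext {R R' : ReversePlanePartition lam m} (h : R.entry = R'.entry) : R = R' := by
  cases R; cases R'; simp_all

theorem entry_le_bound (R : ReversePlanePartition lam m) (p : ℕ × ℕ) : R.entry p ≤ m := by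
  by_cases hp : p ∈ ydCells lam
  · exact (R.mapsTo hp).2
  · simp [R.zero_outside p hp]

instance : Finite (ReversePlanePartition lam m) :=
  finite_of_injective_of_bounded ReversePlanePartition.entry
    (fun _ _ => ReversePlanePartition.ext) (ydCells lam) (fun R => R.zero_outside) m entry_le_bound

def transpose {k n : ℕ} (R : ReversePlanePartition (List.replicate k n) m) :
    ReversePlanePartition (List.replicate n k) m where
  entry p := R.entry p.swap
  zero_outside p hp := R.zero_outside _ (by simpa [mem_ydCells_replicate, and_comm] using hp)
  mapsTo p hp := R.mapsTo (by simpa [mem_ydCells_replicate, and_comm] using hp)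
  row_mono r c h := R.col_mono c r (by simpa [mem_ydCells_replicate, and_comm] using h)
  col_mono r c h := R.row_mono c r (by simpa [mem_ydCells_replicate, and_comm] using h)

def transposeEquiv (k n m : ℕ) :
    ReversePlanePartition (List.replicate k n) m ≃
      ReversePlanePartition (List.replicate n k) m where
  toFun := transpose
  invFun := transpose
  left_inv _ := rfl
  right_inv _ := rfl

end ReversePlanePartition

def lexKey (M : ℕ × ℕ → ℕ) (p : ℕ × ℕ) : Lex (ℕ × Lex (ℕ × ℕ)) := toLex (M p, toLex p)

theorem lexKey_lt_lexKey_iff {M : ℕ × ℕ → ℕ} {p q : ℕ × ℕ} :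
    lexKey M p < lexKey M q ↔ M p ≤ M q ∧ (M p = M q → toLex p < toLex q) :=
  Prod.Lex.toLex_lt_toLex'

theorem lexKey_injective (M : ℕ × ℕ → ℕ) : Function.Injective (lexKey M) := fun p q h => by
  simpa [lexKey] using congrArg (fun x => ofLex (ofLex x).2) h

def keyRank (lam : List ℕ) (M : ℕ × ℕ → ℕ) (p : ℕ × ℕ) : ℕ :=
  #{q ∈ ydCells lam | lexKey M q ≤ lexKey M p}

section keyRank

variable {lam : List ℕ} {M : ℕ × ℕ → ℕ} {p q : ℕ × ℕ}

theorem keyRank_mem_Icc (hp : p ∈ ydCells lam) : keyRank lam M p ∈ Set.Icc 1 lam.sum :=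
  ⟨card_pos.mpr ⟨p, mem_filter.mpr ⟨hp, le_rfl⟩⟩,
    (card_filter_le _ _).trans (card_ydCells lam).le⟩

theorem keyRank_le_keyRank (h : lexKey M p ≤ lexKey M q) : keyRank lam M p ≤ keyRank lam M q :=
  card_le_card (monotone_filter_right _ fun _ _ hr => hr.trans h)

theorem keyRank_lt_keyRank_iff (hq : q ∈ ydCells lam) :
    keyRank lam M p < keyRank lam M q ↔ lexKey M p < lexKey M q := by
  refine ⟨fun h => lt_of_not_ge fun h' => (keyRank_le_keyRank h').not_gt h, fun h => ?_⟩
  refine card_lt_card ((ssubset_iff_of_subset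
    (monotone_filter_right _ fun _ _ hr => hr.trans h.le)).mpr ⟨q, ?_, ?_⟩)
  · exact mem_filter.mpr ⟨hq, le_rfl⟩
  · simpa using fun _ => h

theorem keyRank_injOn : Set.InjOn (keyRank lam M) (ydCells lam) := fun p hp q hq h => by
  refine lexKey_injective M (le_antisymm ?_ ?_) <;> refine le_of_not_gt fun hlt => ?_
  · exact ((keyRank_lt_keyRank_iff (M := M) hp).mpr hlt).ne' h
  · exact ((keyRank_lt_keyRank_iff (M := M) hq).mpr hlt).ne h

end keyRank

abbrev CompatiblePair (lam : List ℕ) (m : ℕ) : Type :=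
  Σ T : SYT lam, CompatibleFun lam.sum (ascSet lam T) m

section Standardization

variable {lam : List ℕ} {m : ℕ}

namespace CompatiblePair

def toRPP (x : CompatiblePair lam m) : ReversePlanePartition lam m where
  entry p := x.2.toFun (x.1.entry p)
  zero_outside p hp := by rw [x.1.zero_outside p hp]; exact x.2.zero_outside 0 (by simp)
  mapsTo _ hp := x.2.mapsTo (x.1.bijOn.mapsTo hp)
  row_mono r c h :=
    x.2.monotoneOn (x.1.entry_le_sum _) (x.1.entry_le_sum _) (x.1.row_incr r c h).le
  col_mono r c h :=
    x.2.monotoneOn (x.1.entry_le_sum _) (x.1.entry_le_sum _) (x.1.col_incr r c h).le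

variable (T : SYT lam) (f : CompatibleFun lam.sum (ascSet lam T) m)

/-- Equal values of `f ∘ T` force increasing rows along the entries in between, since `f` is
strict at every ascent. -/
theorem lexKey_lt_of_entry_lt {p q : ℕ × ℕ} (hp : p ∈ ydCells lam) (hq : q ∈ ydCells lam)
    (h : T.entry p < T.entry q) :
    lexKey (toRPP ⟨T, f⟩).entry p < lexKey (toRPP ⟨T, f⟩).entry q := by
  have hpS := T.bijOn.mapsTo hp
  have hqS := T.bijOn.mapsTo hq
  refine lexKey_lt_lexKey_iff.mpr ⟨f.monotoneOn (h.le.trans hqS.2) hqS.2 h.le, fun hfeq => ?_⟩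
  have hasc : ∀ i ∈ Set.Ico (T.entry p) (T.entry q), i ∉ ascSet lam T := fun i hi hA => by
    have := f.lt_succ_of_mem ⟨hpS.1.trans hi.1, hi.2.trans_le hqS.2⟩ hA
    have := f.monotoneOn hpS.2 (hi.2.le.trans hqS.2) hi.1
    have := f.monotoneOn (show i + 1 ≤ lam.sum from hi.2.trans_le hqS.2) hqS.2
      (show i + 1 ≤ T.entry q from hi.2)
    simp only [toRPP] at hfeq
    omega
  have hrow : p.1 ≤ q.1 := by
    simpa [SYT.cellOf_entry hp, SYT.cellOf_entry hq] using
      T.monotoneOn_row_cellOf hpS.1 hqS.2 hasc ⟨le_rfl, h.le⟩ ⟨h.le, le_rfl⟩ h.le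
  refine Prod.Lex.toLex_lt_toLex'.mpr ⟨hrow, fun hr => lt_of_not_ge fun hc => ?_⟩
  rcases hc.lt_or_eq with hc | hc
  · have := T.entry_lt_entry_of_lt (r := p.1) (by simpa using hp) hc
    rw [show (p.1, q.2) = q from Prod.ext hr rfl] at this
    exact this.not_gt h
  · exact h.ne (congrArg T.entry (Prod.ext hr hc.symm))

theorem entry_eq_keyRank {p : ℕ × ℕ} (hp : p ∈ ydCells lam) :
    T.entry p = keyRank lam (toRPP ⟨T, f⟩).entry p := by
  rw [keyRank, ← T.card_filter_entry_le]
  refine congrArg card (filter_congr fun q hq => ⟨fun h => ?_, fun h => ?_⟩)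
  · rcases h.lt_or_eq with h | h
    · exact (lexKey_lt_of_entry_lt T f hq hp h).le
    · rw [T.bijOn.injOn hq hp h]
  · exact le_of_not_gt fun h' => (lexKey_lt_of_entry_lt T f hp hq h').not_ge h

theorem toRPP_injective : Function.Injective (toRPP : CompatiblePair lam m → _) := by
  rintro ⟨T, f⟩ ⟨T', f'⟩ h
  have hM := congrArg ReversePlanePartition.entry h
  obtain rfl : T = T' := SYT.ext <| funext fun p => by
    by_cases hp : p ∈ ydCells lam
    · rw [entry_eq_keyRank T f hp, entry_eq_keyRank T' f' hp, hM]
    · rw [T.zero_outside p hp, T'.zero_outside p hp]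
  obtain rfl : f = f' := CompatibleFun.ext <| funext fun i => by
    by_cases hi : i ∈ Set.Icc 1 lam.sum
    · rw [← T.entry_cellOf hi]
      exact congrFun hM _
    · rw [f.zero_outside i hi, f'.zero_outside i hi]
  rfl

end CompatiblePair

namespace ReversePlanePartition

variable (R : ReversePlanePartition lam m)

def standardize : SYT lam where
  entry p := if p ∈ ydCells lam then keyRank lam R.entry p else 0
  zero_outside _ hp := if_neg hp
  bijOn := by
    have hmaps : Set.MapsTo (fun p => if p ∈ ydCells lam then keyRank lam R.entry p else 0)
        (ydCells lam) (Set.Icc 1 lam.sum) := fun p hp => by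
      rw [mem_coe] at hp
      simp only [if_pos hp]
      exact keyRank_mem_Icc hp
    have hinj : Set.InjOn (fun p => if p ∈ ydCells lam then keyRank lam R.entry p else 0)
        (ydCells lam) := fun p hp q hq h => by
      simp only [if_pos (mem_coe.mp hp), if_pos (mem_coe.mp hq)] at h
      exact keyRank_injOn hp hq h
    refine ⟨hmaps, hinj, ?_⟩
    simpa using surjOn_of_injOn_of_card_le (t := Icc 1 lam.sum) _ (by simpa using hmaps) hinj
      (by simp [card_ydCells])
  row_incr r c h := by
    rw [if_pos (mem_ydCells_of_le h c.le_succ), if_pos h, keyRank_lt_keyRank_iff h,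
      lexKey_lt_lexKey_iff]
    exact ⟨R.row_mono r c h,
      fun _ => Prod.Lex.toLex_lt_toLex'.mpr ⟨le_rfl, fun _ => c.lt_succ_self⟩⟩
  col_incr r c h := by
    by_cases h' : (r, c) ∈ ydCells lam
    · rw [if_pos h', if_pos h, keyRank_lt_keyRank_iff h, lexKey_lt_lexKey_iff]
      exact ⟨R.col_mono r c h, fun _ => Prod.Lex.toLex_lt_toLex'.mpr ⟨r.le_succ, by omega⟩⟩
    · rw [if_neg h', if_pos h]
      exact (keyRank_mem_Icc h).1

theorem standardize_entry {p : ℕ × ℕ} (hp : p ∈ ydCells lam) :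
    R.standardize.entry p = keyRank lam R.entry p :=
  if_pos hp

noncomputable def compatibleFun : CompatibleFun lam.sum (ascSet lam R.standardize) m where
  toFun i := if i ∈ Set.Icc 1 lam.sum then R.entry (R.standardize.cellOf i) else 0
  mapsTo i hi := by
    dsimp only
    rw [if_pos hi]
    exact R.mapsTo (SYT.cellOf_mem hi)
  add_le_succ i hi := by
    have hi₀ : i ∈ Set.Icc 1 lam.sum := ⟨hi.1, hi.2.le⟩
    have hi₁ : i + 1 ∈ Set.Icc 1 lam.sum := ⟨by omega, hi.2⟩
    rw [if_pos hi₀, if_pos hi₁]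
    set p := R.standardize.cellOf i
    set q := R.standardize.cellOf (i + 1)
    have hp : p ∈ ydCells lam := SYT.cellOf_mem hi₀
    have hq : q ∈ ydCells lam := SYT.cellOf_mem hi₁
    have hpq : R.standardize.entry p < R.standardize.entry q := by
      rw [SYT.entry_cellOf hi₀, SYT.entry_cellOf hi₁]
      exact i.lt_succ_self
    rw [standardize_entry R hp, standardize_entry R hq, keyRank_lt_keyRank_iff hq,
      lexKey_lt_lexKey_iff] at hpq
    split_ifs with hA
    · rw [SYT.mem_ascSet_iff hi.1 hi.2] at hA
      refine Nat.succ_le_of_lt (hpq.1.lt_of_ne fun he => ?_)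
      exact (Prod.Lex.toLex_lt_toLex'.mp (hpq.2 he)).1.not_gt hA
    · exact hpq.1
  zero_outside _ hi := if_neg hi

theorem toRPP_standardize : CompatiblePair.toRPP ⟨R.standardize, R.compatibleFun⟩ = R := by
  ext p
  by_cases hp : p ∈ ydCells lam
  · simp only [CompatiblePair.toRPP, compatibleFun]
    rw [if_pos (R.standardize.bijOn.mapsTo hp), SYT.cellOf_entry hp]
  · simp only [CompatiblePair.toRPP, compatibleFun]
    rw [R.standardize.zero_outside p hp, R.zero_outside p hp]
    exact if_neg (by simp)

end ReversePlanePartition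

variable (lam m) in
noncomputable def compatiblePairEquiv :
    CompatiblePair lam m ≃ ReversePlanePartition lam m :=
  Equiv.ofBijective CompatiblePair.toRPP
    ⟨CompatiblePair.toRPP_injective, fun R => ⟨_, R.toRPP_standardize⟩⟩

end Standardization

theorem sum_tsub_eq_sum_range_card_mul {α : Type*} [Fintype α] (g : α → ℕ) {F : ℕ → ℕ}
    (hF : F 0 = 0) (m : ℕ) :
    ∑ a, F (m - g a) = ∑ h ∈ range m, Nat.card {a // g a = h} * F (m - h) := by
  classical
  rw [← sum_filter_of_ne (p := fun a => g a < m) fun a _ ha => by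
    by_contra hm
    rw [Nat.sub_eq_zero_of_le (not_lt.mp hm), hF] at ha
    exact ha rfl]
  rw [← sum_fiberwise_of_maps_to (t := range m) (g := g) fun a ha => by
    simpa using (mem_filter.mp ha).2]
  refine sum_congr rfl fun h hh => ?_
  rw [filter_filter, sum_const_nat fun a ha => by rw [(mem_filter.mp ha).2.2],
    Nat.card_eq_fintype_card, Fintype.card_subtype]
  congr 2
  ext a
  simp only [mem_filter, mem_univ, true_and, and_iff_right_iff_imp]
  rintro rfl
  exact mem_range.mp hh

theorem eq_of_forall_sum_range_mul_tsub_eq {a b F : ℕ → ℕ} (hF : F 1 = 1)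
    (h : ∀ m, ∑ x ∈ range m, a x * F (m - x) = ∑ x ∈ range m, b x * F (m - x)) : a = b := by
  funext x
  induction x using Nat.strong_induction_on with
  | _ x ih =>
    have hx := h (x + 1)
    rw [sum_range_succ, sum_range_succ, Nat.add_sub_cancel_left, hF,
      sum_congr rfl fun y hy => by rw [ih y (mem_range.mp hy)]] at hx
    simpa using hx

theorem card_rpp_eq_sum {lam : List ℕ} (hS : 1 ≤ lam.sum) (m : ℕ) :
    Nat.card (ReversePlanePartition lam m) = ∑ h ∈ range m,
      Nat.card {T : SYT lam // ascNum lam T = h} * Nat.card (CompatibleFun lam.sum ∅ (m - h)) := by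
  have : Fintype (SYT lam) := Fintype.ofFinite _
  rw [← Nat.card_congr (compatiblePairEquiv lam m), Nat.card_sigma]
  simp only [CompatibleFun.card_eq_card_empty hS (SYT.ascSet_subset_Ico _)]
  exact sum_tsub_eq_sum_range_card_mul (ascNum lam)
    (F := fun j => Nat.card (CompatibleFun lam.sum ∅ j)) (CompatibleFun.card_empty_zero hS) m

theorem card_ascNum_eq_of_card_rpp_eq {lam mu : List ℕ} (hS : 1 ≤ lam.sum)
    (hsum : lam.sum = mu.sum)
    (hR : ∀ m, Nat.card (ReversePlanePartition lam m) = Nat.card (ReversePlanePartition mu m)) :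
    (fun h => Nat.card {T : SYT lam // ascNum lam T = h}) =
      fun h => Nat.card {T : SYT mu // ascNum mu T = h} := by
  refine eq_of_forall_sum_range_mul_tsub_eq (F := fun j => Nat.card (CompatibleFun lam.sum ∅ j))
    CompatibleFun.card_empty_one fun m => ?_
  rw [← card_rpp_eq_sum hS, hR, card_rpp_eq_sum (hsum ▸ hS), hsum]

theorem narayana_swap_general (k n h : ℕ) (hk : 1 ≤ k) (hn : 1 ≤ n) :
    Nat.card {T : SYT (List.replicate k n) // ascNum (List.replicate k n) T = h} =
      Nat.card {T : SYT (List.replicate n k) // ascNum (List.replicate n k) T = h} :=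
  congrFun (card_ascNum_eq_of_card_rpp_eq (by simpa using Nat.mul_le_mul hk hn)
    (by simp [mul_comm]) fun m => Nat.card_congr (ReversePlanePartition.transposeEquiv k n m)) h

/-- Theorem: `N(k,n,h) = N(n,k,h)`: the number of standard Young tableaux of shape
`(n^k)` with `h` ascents equals the number of those of shape `(k^n)` with `h` ascents. -/
theorem narayana_swap (k n h : ℕ) (hk : 1 ≤ k) (hn : 1 ≤ n)
    (hh : h ≤ (k - 1) * (n - 1)) :
    Nat.card {T : SYT (List.replicate k n) // ascNum (List.replicate k n) T = h} =
      Nat.card {T : SYT (List.replicate n k) // ascNum (List.replicate n k) T = h} :=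
  narayana_swap_general k n h hk hn
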